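/- arXiv:1006.5098 — 5 statements merged into one kernel-verified Lean document; each statement's English description precedes it below -/
import Mathlib

section
/- Let Q be a cost dioid and P = (Σ, M, I, F) a quantitative program over a finite state set Σ in which every state is reachable from I. Let Γ be the set of cycles of M, i.e., finite sequences of states σ₀, σ₁, …, σ_k with k ≥ 1 and σ_k = σ₀ such that M_{σⱼ,σⱼ₊₁} ≠ ⊥ for all j < k; the average cost of such a cycle c is q̃(c) = √[k]{ ⨂_{j=0}^{k−1} M_{σⱼ,σⱼ₊₁} }. Then the long-run cost of P equals the supremum of the average costs of all cycles: ρ(P) = ⨆_{c ∈ Γ} q̃(c). -/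
/-!
Since addition is the join, `(M ^ k) σ σ` is the supremum of the weights of the closed walks of
length `k` at `σ`. A walk through a `⊥` entry has weight `⊥`, and every other one is a cycle whose
weight is the `k`-th power of its average, so `tr (M ^ k) ≤ s ^ k` for the supremum `s` of the
cycle averages; taking `k`-th roots gives `ρ(P) ≤ s`.

Conversely, a closed walk of length `k > |Σ|` revisits a state, so it splits into a closed loop of
length `d` and a closed walk of length `k - d`. Its weight `q₁ q₂` is at most
`(√[d]{q₁} ⊔ √[k-d]{q₂}) ^ k`, so its average is at most the larger of the two shorter averages.
By strong induction on `k` every closed-walk average is bounded by that of some closed walk of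
length at most `|Σ|`, which in turn is bounded by `√[m]{tr M^m}` for its length `m`.
-/

open Finset

structure IsRootFunction {Q : Type*} [Monoid Q] (root : Q → ℕ → Q) : Prop where
  pow_root : ∀ (q : Q) (n : ℕ), 1 ≤ n → root q n ^ n = q
  eq_root_of_pow_eq : ∀ (q x : Q) (n : ℕ), 1 ≤ n → x ^ n = q → x = root q n

namespace IsRootFunction

variable {Q : Type*} {root : Q → ℕ → Q} {n : ℕ}

theorem root_pow [Monoid Q] (hr : IsRootFunction root) (hn : 1 ≤ n) (x : Q) :
    root (x ^ n) n = x :=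
  (hr.eq_root_of_pow_eq _ x n hn rfl).symm

theorem monotone [IdemCommSemiring Q] (hr : IsRootFunction root)
    (hpow_sup : ∀ a b : Q, (a ⊔ b) ^ n = a ^ n ⊔ b ^ n) (hn : 1 ≤ n) :
    Monotone (root · n) := by
  intro q q' hq
  have hpow : (root q n ⊔ root q' n) ^ n = q' := by
    rw [hpow_sup, hr.pow_root q n hn, hr.pow_root q' n hn, sup_eq_right.2 hq]
  exact sup_eq_right.1 (hr.eq_root_of_pow_eq _ _ n hn hpow)

theorem root_mul_le_sup [IdemCommSemiring Q] (hr : IsRootFunction root)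
    (hpow_sup : ∀ (n : ℕ) (a b : Q), (a ⊔ b) ^ n = a ^ n ⊔ b ^ n)
    {k₁ k₂ : ℕ} (hk₁ : 1 ≤ k₁) (hk₂ : 1 ≤ k₂) (q₁ q₂ : Q) :
    root (q₁ * q₂) (k₁ + k₂) ≤ root q₁ k₁ ⊔ root q₂ k₂ := by
  set r := root q₁ k₁ ⊔ root q₂ k₂
  have hq : q₁ * q₂ ≤ r ^ (k₁ + k₂) :=
    calc q₁ * q₂ = root q₁ k₁ ^ k₁ * root q₂ k₂ ^ k₂ := by
          rw [hr.pow_root q₁ k₁ hk₁, hr.pow_root q₂ k₂ hk₂]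
      _ ≤ r ^ k₁ * r ^ k₂ :=
          mul_le_mul' (pow_le_pow_left' le_sup_left k₁) (pow_le_pow_left' le_sup_right k₂)
      _ = r ^ (k₁ + k₂) := (pow_add r k₁ k₂).symm
  calc root (q₁ * q₂) (k₁ + k₂) ≤ root (r ^ (k₁ + k₂)) (k₁ + k₂) :=
        hr.monotone (hpow_sup _) (by omega) hq
    _ = r := hr.root_pow (by omega) r

end IsRootFunction

section Walks

variable {S Q : Type*}

def walkWeight [CommMonoid Q] (M : Matrix S S Q) (P : ℕ → S) (k : ℕ) : Q :=
  ∏ t ∈ range k, M (P t) (P (t + 1))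

def cutLoop (P : ℕ → S) (i d : ℕ) : ℕ → S :=
  fun t => if t ≤ i then P t else P (t + d)

variable [CommMonoid Q] (M : Matrix S S Q)

def cycleAverages [Bot Q] (root : Q → ℕ → Q) : Set Q :=
  { q : Q | ∃ k : ℕ, 1 ≤ k ∧ ∃ p : Fin (k + 1) → S,
    p (Fin.last k) = p 0 ∧
    (∀ j : Fin k, M (p j.castSucc) (p j.succ) ≠ ⊥) ∧
    q = root (∏ j : Fin k, M (p j.castSucc) (p j.succ)) k }

theorem walkWeight_congr {P P' : ℕ → S} {k : ℕ} (h : ∀ t ≤ k, P t = P' t) :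
    walkWeight M P k = walkWeight M P' k :=
  prod_congr rfl fun t ht => by
    have ht := mem_range.1 ht
    rw [h t (by omega), h (t + 1) (by omega)]

theorem walkWeight_succ (P : ℕ → S) (k : ℕ) :
    walkWeight M P (k + 1) = walkWeight M P k * M (P k) (P (k + 1)) :=
  prod_range_succ _ _

theorem walkWeight_add (P : ℕ → S) (m n : ℕ) :
    walkWeight M P (m + n) = walkWeight M P m * walkWeight M (fun t => P (m + t)) n :=
  prod_range_add _ _ _

theorem prod_fin_eq_walkWeight (P : ℕ → S) (k : ℕ) :
    ∏ j : Fin k, M (P j.castSucc) (P j.succ) = walkWeight M P k :=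
  Fin.prod_univ_eq_prod_range (fun t => M (P t) (P (t + 1))) k

theorem walkWeight_split (P : ℕ → S) (i d e : ℕ) :
    walkWeight M P (i + d + e) = walkWeight M (fun t => P (i + t)) d *
      (walkWeight M P i * walkWeight M (fun t => P (i + d + t)) e) := by
  rw [walkWeight_add, walkWeight_add]
  ac_rfl

theorem walkWeight_cutLoop {P : ℕ → S} {i d : ℕ} (h : P (i + d) = P i) (e : ℕ) :
    walkWeight M (cutLoop P i d) (i + e) =
      walkWeight M P i * walkWeight M (fun t => P (i + d + t)) e := by
  rw [walkWeight_add, walkWeight_congr M (P := cutLoop P i d) (P' := P) fun t ht => if_pos ht]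
  congr 2
  funext t
  rcases t with _ | t
  · simp [cutLoop, h]
  · simp only [cutLoop, if_neg (show ¬ i + (t + 1) ≤ i by omega)]
    congr 1
    omega

end Walks

theorem exists_lt_lt_map_eq_of_card_lt {S : Type*} [Fintype S] (P : ℕ → S) {k : ℕ}
    (hk : Fintype.card S < k) : ∃ i j, i < j ∧ j < k ∧ P i = P j := by
  obtain ⟨a, b, hab, heq⟩ :=
    Fintype.exists_ne_map_eq_of_card_lt (fun t : Fin k => P t) (by simpa using hk)
  rcases lt_or_gt_of_ne (Fin.val_ne_of_ne hab) with h | h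
  · exact ⟨a, b, h, b.2, heq⟩
  · exact ⟨b, a, h, a.2, heq.symm⟩

section Cycles

variable {S Q : Type*} [Fintype S] [IdemCommSemiring Q] (M : Matrix S S Q)

theorem root_walkWeight_le_of_short {root : Q → ℕ → Q} (hr : IsRootFunction root)
    (hpow_sup : ∀ (n : ℕ) (a b : Q), (a ⊔ b) ^ n = a ^ n ⊔ b ^ n) {L : Q}
    (hshort : ∀ m, 1 ≤ m → m ≤ Fintype.card S → ∀ P : ℕ → S, P m = P 0 →
      root (walkWeight M P m) m ≤ L) :
    ∀ k, 1 ≤ k → ∀ P : ℕ → S, P k = P 0 → root (walkWeight M P k) k ≤ L := by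
  intro k
  induction k using Nat.strong_induction_on with
  | _ k ih =>
  intro hk P hcyc
  rcases le_or_gt k (Fintype.card S) with hkS | hkS
  · exact hshort k hk hkS P hcyc
  obtain ⟨i, j, hij, hjk, hPij⟩ := exists_lt_lt_map_eq_of_card_lt P hkS
  obtain ⟨d, rfl⟩ : ∃ d, j = i + d := ⟨j - i, by omega⟩
  obtain ⟨e, rfl⟩ : ∃ e, k = i + d + e := ⟨k - (i + d), by omega⟩
  have hloop : root (walkWeight M (fun t => P (i + t)) d) d ≤ L :=
    ih d (by omega) (by omega) _ hPij.symm
  have hrest : root (walkWeight M P i * walkWeight M (fun t => P (i + d + t)) e) (i + e) ≤ L := by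
    rw [← walkWeight_cutLoop M hPij.symm]
    refine ih (i + e) (by omega) (by omega) _ ?_
    simp only [cutLoop, if_neg (show ¬ i + e ≤ i by omega), if_pos (Nat.zero_le i)]
    rw [← hcyc]
    congr 1
    omega
  calc root (walkWeight M P (i + d + e)) (i + d + e)
      = root (walkWeight M (fun t => P (i + t)) d *
          (walkWeight M P i * walkWeight M (fun t => P (i + d + t)) e)) (d + (i + e)) := by
        rw [walkWeight_split, show i + d + e = d + (i + e) by omega]
    _ ≤ _ := hr.root_mul_le_sup hpow_sup (by omega) (by omega) _ _
    _ ≤ L := sup_le hloop hrest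

variable [DecidableEq S]

theorem walkWeight_le_pow_apply (P : ℕ → S) (k : ℕ) :
    walkWeight M P k ≤ (M ^ k) (P 0) (P k) := by
  induction k with
  | zero => simp [walkWeight]
  | succ k ih =>
    rw [walkWeight_succ, pow_succ, Matrix.mul_apply]
    exact (mul_le_mul' ih le_rfl).trans
      (single_le_sum (f := fun c => (M ^ k) (P 0) c * M c (P (k + 1)))
        (fun _ _ => zero_le) (mem_univ (P k)))

theorem pow_apply_mul_le {k : ℕ} {σ τ : S} {x C : Q}
    (h : ∀ P : ℕ → S, P 0 = σ → P k = τ → walkWeight M P k * x ≤ C) :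
    (M ^ k) σ τ * x ≤ C := by
  induction k generalizing τ x with
  | zero =>
    rcases eq_or_ne σ τ with rfl | hne
    · simpa [walkWeight] using h (fun _ => σ) rfl rfl
    · simp [Matrix.one_apply_ne hne]
  | succ k ih =>
    rw [pow_succ, Matrix.mul_apply, sum_mul]
    refine sum_induction _ (· ≤ C) (fun _ _ => add_le) zero_le fun c _ => ?_
    rw [mul_assoc]
    refine ih fun P hP₀ hPk => ?_
    have hext := h (Function.update P (k + 1) τ) (by simp [hP₀]) (by simp)
    rwa [walkWeight_succ,
      walkWeight_congr M (P' := P) fun t ht => Function.update_of_ne (by omega) _ _,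
      Function.update_of_ne (by omega), Function.update_self, hPk, mul_assoc] at hext

theorem pow_apply_le_of_forall_walkWeight_le {k : ℕ} {σ τ : S} {C : Q}
    (h : ∀ P : ℕ → S, P 0 = σ → P k = τ → walkWeight M P k ≤ C) : (M ^ k) σ τ ≤ C := by
  simpa using pow_apply_mul_le M (x := 1) (by simpa using h)

theorem pow_apply_self_le_pow {root : Q → ℕ → Q} (hr : IsRootFunction root) {s : Q}
    (hs : s ∈ upperBounds (cycleAverages M root)) {k : ℕ} (hk : 1 ≤ k) (σ : S) :
    (M ^ k) σ σ ≤ s ^ k := by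
  refine pow_apply_le_of_forall_walkWeight_le M fun P hP₀ hPk => ?_
  by_cases hsteps : ∀ t < k, M (P t) (P (t + 1)) ≠ 0
  · have hmem : root (walkWeight M P k) k ∈ cycleAverages M root :=
      ⟨k, hk, fun j => P j, by simp [hP₀, hPk],
        fun j => bot_eq_zero (α := Q) ▸ hsteps j j.2, by rw [prod_fin_eq_walkWeight]⟩
    rw [← hr.pow_root (walkWeight M P k) k hk]
    exact pow_le_pow_left' (hs hmem) k
  · push Not at hsteps
    obtain ⟨t, ht, hzero⟩ := hsteps
    rw [walkWeight, prod_eq_zero (mem_range.2 ht) hzero]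
    exact zero_le

theorem mem_upperBounds_cycleAverages {root : Q → ℕ → Q} (hr : IsRootFunction root)
    (hpow_sup : ∀ (n : ℕ) (a b : Q), (a ⊔ b) ^ n = a ^ n ⊔ b ^ n) {L : Q}
    (hL : ∀ m ∈ Icc 1 (Fintype.card S), ∀ σ, root ((M ^ m) σ σ) m ≤ L) :
    L ∈ upperBounds (cycleAverages M root) := by
  rintro _ ⟨k, hk, p, hclosed, -, rfl⟩
  have hshort : ∀ m, 1 ≤ m → m ≤ Fintype.card S → ∀ P : ℕ → S, P m = P 0 →
      root (walkWeight M P m) m ≤ L := fun m hm₁ hmS P hP =>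
    (hr.monotone (hpow_sup m) hm₁ <| hP ▸ walkWeight_le_pow_apply M P m).trans
      (hL m (mem_Icc.2 ⟨hm₁, hmS⟩) (P 0))
  open Fin.NatCast in
  have hcycle := root_walkWeight_le_of_short M hr hpow_sup hshort k hk (fun t => p t)
    (by simpa [Fin.natCast_eq_last] using hclosed)
  simpa [← prod_fin_eq_walkWeight] using hcycle

end Cycles

theorem stmt_2_general {Q : Type*} [CommSemiring Q] [CompleteLattice Q]
    (hsup : ∀ a b : Q, a ⊔ b = a + b)
    (root : Q → ℕ → Q)
    (hroot : ∀ (q : Q) (n : ℕ), 1 ≤ n → root q n ^ n = q)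
    (hroot_unique : ∀ (q x : Q) (n : ℕ), 1 ≤ n → x ^ n = q → x = root q n)
    (hlsc : ∀ (n : ℕ), 1 ≤ n → ∀ X : Set Q, sSup X ^ n = ⨆ x ∈ X, x ^ n)
    {S : Type*} [Fintype S] [DecidableEq S]
    (M : Matrix S S Q) :
    (⨆ k ∈ Finset.Icc 1 (Fintype.card S), root (⨆ σ : S, (M ^ k) σ σ) k) =
      sSup { q : Q | ∃ k : ℕ, 1 ≤ k ∧ ∃ p : Fin (k + 1) → S,
        p (Fin.last k) = p 0 ∧
        (∀ j : Fin k, M (p j.castSucc) (p j.succ) ≠ ⊥) ∧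
        q = root (∏ j : Fin k, M (p j.castSucc) (p j.succ)) k } := by
  let _ : IdemCommSemiring Q :=
    { ‹CommSemiring Q›, ‹CompleteLattice Q› with add_eq_sup := fun a b => (hsup a b).symm }
  have hr : IsRootFunction root := ⟨hroot, hroot_unique⟩
  have hpow_sup : ∀ (n : ℕ) (a b : Q), (a ⊔ b) ^ n = a ^ n ⊔ b ^ n := by
    rintro (_ | n) a b
    · simp
    · simpa only [sSup_pair, iSup_pair] using hlsc (n + 1) (by omega) {a, b}
  apply le_antisymm
  · refine iSup₂_le fun k hk => ?_
    have hk₁ : 1 ≤ k := (mem_Icc.1 hk).1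
    calc root (⨆ σ, (M ^ k) σ σ) k
        ≤ root (sSup (cycleAverages M root) ^ k) k :=
          hr.monotone (hpow_sup k) hk₁ <| iSup_le <|
            pow_apply_self_le_pow M hr (fun _ => le_sSup) hk₁
      _ = sSup (cycleAverages M root) := hr.root_pow hk₁ _
  · exact sSup_le <| mem_upperBounds_cycleAverages M hr hpow_sup fun m hm σ =>
      le_iSup₂_of_le m hm <|
        hr.monotone (hpow_sup m) (mem_Icc.1 hm).1 (le_iSup (fun σ => (M ^ m) σ σ) σ)

/-- In a cost dioid `Q`, for a quantitative program `P = (Σ, M, I, F)` over a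
finite state set in which every state is reachable from `I`, the long-run cost
`ρ(P) = ⨆_{k=1}^{|Σ|} √[k]{tr (M ^ k)}` equals the supremum of the average costs
`√[k]{⨂_j M (σ j) (σ (j+1))}` over all cycles (paths with `σ_k = σ₀`, all steps `≠ ⊥`). -/
theorem stmt_2 {Q : Type*} [CommSemiring Q] [CompleteLattice Q]
    (hidem : ∀ a : Q, a + a = a)
    (hle : ∀ a b : Q, a ≤ b ↔ a + b = b)
    (hsup : ∀ a b : Q, a ⊔ b = a + b)
    (hbot : (⊥ : Q) = 0)
    (hdistrib : ∀ (a : Q) (X : Set Q), a * sSup X = ⨆ x ∈ X, a * x)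
    (root : Q → ℕ → Q)
    (hroot : ∀ (q : Q) (n : ℕ), 1 ≤ n → root q n ^ n = q)
    (hroot_unique : ∀ (q x : Q) (n : ℕ), 1 ≤ n → x ^ n = q → x = root q n)
    (hlsc : ∀ (n : ℕ), 1 ≤ n → ∀ X : Set Q, sSup X ^ n = ⨆ x ∈ X, x ^ n)
    {S : Type*} [Fintype S] [DecidableEq S]
    (M : Matrix S S Q) (I F : Set S)
    (hreach : ∀ σ : S, ∃ n : ℕ, ∃ p : Fin (n + 1) → S, p 0 ∈ I ∧ p (Fin.last n) = σ ∧
      ∀ j : Fin n, M (p j.castSucc) (p j.succ) ≠ ⊥) :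
    (⨆ k ∈ Finset.Icc 1 (Fintype.card S), root (⨆ σ : S, (M ^ k) σ σ) k) =
      sSup { q : Q | ∃ k : ℕ, 1 ≤ k ∧ ∃ p : Fin (k + 1) → S,
        p (Fin.last k) = p 0 ∧
        (∀ j : Fin k, M (p j.castSucc) (p j.succ) ≠ ⊥) ∧
        q = root (∏ j : Fin k, M (p j.castSucc) (p j.succ)) k } :=
  stmt_2_general hsup root hroot hroot_unique hlsc M
end

section
/- Let Q be a complete idempotent dioid, α : Σ → Σ# a function between finite state sets, and P = (Σ, M, I, F) a quantitative program over Σ. Define M# = α↑ M (α↑)ᵀ, I# = { α(σ) : σ ∈ I }, F# = { α(σ) : σ ∈ F }, and P# = (Σ#, M#, I#, F#). Then (P, P#, α) is a correct abstraction; moreover it is the best one: if P' = (Σ#, M', I', F') is such that (P, P', α) is a correct abstraction, then M# ≤ M' (entrywise), I# ⊆ I' and F# ⊆ F'. -/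
open Matrix

/-!
In the canonical order `0` is the least element, so `α↑` is the matrix `(1 : Matrix Σ# Σ# Q).submatrix id α`, so that
`(N α↑) a σ = N a (α σ)` while `(X (α↑)ᵀ) a b` is the sum of the `X a τ` over the fibre `α τ = b`.
In a canonically ordered idempotent monoid a finite sum is bounded by `c` exactly when each
summand is, so `X ↦ X (α↑)ᵀ` is left adjoint to `N ↦ N α↑`. Taking `X = α↑ M`, the unit of this
Galois connection is the correctness of `M#`, and the adjunction itself is its optimality.
-/

section CanonicalIdempotent

variable {Q : Type*}

theorem bot_eq_zero_of_le_iff_add_eq [AddMonoid Q] [PartialOrder Q] [OrderBot Q]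
    (hle : ∀ a b : Q, a ≤ b ↔ a + b = b) : (⊥ : Q) = 0 :=
  le_antisymm bot_le ((hle 0 ⊥).2 (zero_add ⊥))

theorem add_le_iff_of_le_iff_add_eq [AddCommMonoid Q] [PartialOrder Q]
    (hle : ∀ a b : Q, a ≤ b ↔ a + b = b) {a b c : Q} : a + b ≤ c ↔ a ≤ c ∧ b ≤ c := by
  have le_add_self : ∀ x y : Q, x ≤ x + y := fun x y => by
    rw [hle, ← add_assoc, (hle x x).1 le_rfl]
  refine ⟨fun h => ⟨(le_add_self a b).trans h, (add_comm a b ▸ le_add_self b a).trans h⟩, ?_⟩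
  rintro ⟨hac, hbc⟩
  rw [hle] at hac hbc ⊢
  rw [add_assoc, hbc, hac]

theorem Finset.sum_le_iff_of_le_iff_add_eq [AddCommMonoid Q] [PartialOrder Q]
    (hle : ∀ a b : Q, a ≤ b ↔ a + b = b) {ι : Type*} (s : Finset ι) (f : ι → Q) (c : Q) :
    ∑ i ∈ s, f i ≤ c ↔ ∀ i ∈ s, f i ≤ c := by
  classical
  induction s using Finset.induction with
  | empty => simp [(hle 0 c).2 (zero_add c)]
  | insert x s hx ih =>
    rw [Finset.sum_insert hx, add_le_iff_of_le_iff_add_eq hle, ih, Finset.forall_mem_insert]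

end CanonicalIdempotent

section LinearLift

variable {Q : Type*} [NonAssocSemiring Q] {l S S' : Type*} [DecidableEq S']

theorem mul_one_submatrix_apply [Fintype S'] (α : S → S') (N : Matrix l S' Q) (a : l) (σ : S) :
    (N * (1 : Matrix S' S' Q).submatrix id α) a σ = N a (α σ) :=
  congrFun₂ (mul_submatrix_one (Equiv.refl S') α N) a σ

theorem mul_transpose_one_submatrix_apply [Fintype S] (α : S → S') (X : Matrix l S Q)
    (a : l) (b : S') :
    (X * ((1 : Matrix S' S' Q).submatrix id α)ᵀ) a b = ∑ τ with α τ = b, X a τ := by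
  simp [mul_apply, one_apply, Finset.sum_filter]

theorem mul_transpose_one_submatrix_le_iff [PartialOrder Q] [Fintype S] [Fintype S']
    (hle : ∀ a b : Q, a ≤ b ↔ a + b = b) (α : S → S') (X : Matrix l S Q) (N : Matrix l S' Q) :
    (∀ a b, (X * ((1 : Matrix S' S' Q).submatrix id α)ᵀ) a b ≤ N a b) ↔
      ∀ a σ, X a σ ≤ (N * (1 : Matrix S' S' Q).submatrix id α) a σ := by
  simp only [mul_transpose_one_submatrix_apply, mul_one_submatrix_apply,
    Finset.sum_le_iff_of_le_iff_add_eq hle, Finset.mem_filter, Finset.mem_univ, true_and]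
  exact ⟨fun h a σ => h a (α σ) σ rfl, fun h a b τ hτ => hτ ▸ h a τ⟩

end LinearLift

theorem stmt_5_general {Q : Type*} [CommSemiring Q] [CompleteLattice Q]
    (hle : ∀ a b : Q, a ≤ b ↔ a + b = b)
    {S S' : Type*} [Fintype S] [Fintype S'] [DecidableEq S']
    (α : S → S') (M : Matrix S S Q) (I F : Set S) :
    let A : Matrix S' S Q := Matrix.of fun a σ => if α σ = a then (1 : Q) else ⊥
    let M' : Matrix S' S' Q := A * M * Aᵀ
    ((∀ (a : S') (σ : S), (A * M) a σ ≤ (M' * A) a σ) ∧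
      α '' I ⊆ α '' I ∧ α '' F ⊆ α '' F) ∧
    (∀ (M'' : Matrix S' S' Q) (I'' F'' : Set S'),
      (∀ (a : S') (σ : S), (A * M) a σ ≤ (M'' * A) a σ) →
      α '' I ⊆ I'' → α '' F ⊆ F'' →
      (∀ a b : S', M' a b ≤ M'' a b) ∧ α '' I ⊆ I'' ∧ α '' F ⊆ F'') := by
  intro A M'
  have hA : A = (1 : Matrix S' S' Q).submatrix id α := by
    ext a σ
    simp [A, one_apply, bot_eq_zero_of_le_iff_add_eq hle, eq_comm]
  have galois := mul_transpose_one_submatrix_le_iff hle α (A * M)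
  rw [← hA] at galois
  exact ⟨⟨(galois M').1 fun _ _ => le_rfl, subset_rfl, subset_rfl⟩,
    fun M'' _ _ hM'' hI hF => ⟨(galois M'').2 hM'', hI, hF⟩⟩

/-- Let `Q` be a complete idempotent dioid, `α : Σ → Σ#`,
`P = (Σ, M, I, F)` a program. With `M# = α↑ M (α↑)ᵀ`, `I# = α '' I`, `F# = α '' F`, the
triple `(P, P#, α)` is a correct abstraction, and it is the best one: every other correct
abstraction `(Σ#, M', I', F')` satisfies `M# ≤ M'` entrywise, `I# ⊆ I'` and `F# ⊆ F'`. -/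
theorem stmt_5 {Q : Type*} [CommSemiring Q] [CompleteLattice Q]
    (hidem : ∀ a : Q, a + a = a)
    (hle : ∀ a b : Q, a ≤ b ↔ a + b = b)
    (hsup : ∀ a b : Q, a ⊔ b = a + b)
    (hbot : (⊥ : Q) = 0)
    (hdistrib : ∀ (a : Q) (X : Set Q), a * sSup X = ⨆ x ∈ X, a * x)
    {S S' : Type*} [Fintype S] [DecidableEq S] [Fintype S'] [DecidableEq S']
    (α : S → S') (M : Matrix S S Q) (I F : Set S) :
    let A : Matrix S' S Q := Matrix.of fun a σ => if α σ = a then (1 : Q) else ⊥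
    let M' : Matrix S' S' Q := A * M * Aᵀ
    ((∀ (a : S') (σ : S), (A * M) a σ ≤ (M' * A) a σ) ∧
      α '' I ⊆ α '' I ∧ α '' F ⊆ α '' F) ∧
    (∀ (M'' : Matrix S' S' Q) (I'' F'' : Set S'),
      (∀ (a : S') (σ : S), (A * M) a σ ≤ (M'' * A) a σ) →
      α '' I ⊆ I'' → α '' F ⊆ F'' →
      (∀ a b : S', M' a b ≤ M'' a b) ∧ α '' I ⊆ I'' ∧ α '' F ⊆ F'') :=
  stmt_5_general hle α M I F
end

section
/- Let Q be a complete idempotent dioid, α : Σ → Σ# a function between finite state sets, P = (Σ, M, I, F) and P# = (Σ#, M#, I#, F#) quantitative programs. If (P, P#, α) is a correct abstraction, then gc(P) ≤ gc(P#) in the order of Q. -/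
open Matrix

/-!
The canonical order `a ≤ b ↔ a + b = b` makes `Q` a canonically ordered semiring, so matrix
multiplication is monotone entrywise. The simulation inequality `α↑ M ≤ M# α↑` therefore iterates
to `α↑ Mᵏ ≤ M#ᵏ α↑`. Read at the entry `(α i, f)`, the left side dominates `Mᵏ i f` (column `i`
of `α↑` has `e` in row `α i`) and the right side is `M#ᵏ (α i) (α f)` (multiplying by `α↑` on the
right reindexes columns along `α`). As `α` sends initial and final states to abstract initial and
final states, every term of `gc(P)` is below a term of `gc(P#)`.
-/

theorem canonicallyOrderedAdd_of_le_iff_add_eq {R : Type*} [AddCommMonoid R] [Preorder R]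
    (h : ∀ a b : R, a ≤ b ↔ a + b = b) : CanonicallyOrderedAdd R where
  exists_add_of_le {a b} hab := ⟨b, ((h a b).1 hab).symm⟩
  le_self_add a b := (h _ _).2 <| by rw [← add_assoc, (h a a).1 le_rfl]
  le_add_self a b := (h _ _).2 <| by rw [add_left_comm, (h a a).1 le_rfl]

namespace Matrix

variable {R : Type*} [Semiring R] {l m n : Type*}

variable (R) in
def linearLift [DecidableEq n] (α : m → n) : Matrix n m R :=
  of fun a σ => if α σ = a then 1 else 0

theorem mul_linearLift_apply [Fintype n] [DecidableEq n] (α : m → n) (N : Matrix l n R)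
    (a : l) (σ : m) : (N * linearLift R α) a σ = N a (α σ) := by
  rw [mul_apply]
  simp [linearLift]

variable [Preorder R] [CanonicallyOrderedAdd R]

theorem mul_apply_le_mul_apply [Fintype m] {A A' : Matrix l m R} {B B' : Matrix m n R}
    (hA : ∀ i j, A i j ≤ A' i j) (hB : ∀ i j, B i j ≤ B' i j) (i : l) (k : n) :
    (A * B) i k ≤ (A' * B') i k :=
  Finset.sum_le_sum fun j _ => mul_le_mul' (hA i j) (hB j k)

theorem apply_le_linearLift_mul_apply [Fintype m] [DecidableEq n] (α : m → n)
    (N : Matrix m l R) (i : m) (f : l) : N i f ≤ (linearLift R α * N) (α i) f :=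
  calc N i f = linearLift R α (α i) i * N i f := by simp [linearLift]
    _ ≤ ∑ σ, linearLift R α (α i) σ * N σ f :=
      Finset.single_le_sum (f := fun σ => linearLift R α (α i) σ * N σ f)
        (fun _ _ => zero_le) (Finset.mem_univ i)

theorem mul_pow_apply_le_pow_mul_apply [Fintype m] [DecidableEq m] [Fintype n] [DecidableEq n]
    {A : Matrix n m R} {M : Matrix m m R} {M' : Matrix n n R}
    (h : ∀ a σ, (A * M) a σ ≤ (M' * A) a σ) (k : ℕ) :
    ∀ a σ, (A * M ^ k) a σ ≤ (M' ^ k * A) a σ := by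
  induction k with
  | zero => simp
  | succ k ih =>
    intro a σ
    calc (A * M ^ (k + 1)) a σ = (A * M ^ k * M) a σ := by rw [pow_succ, Matrix.mul_assoc]
      _ ≤ (M' ^ k * A * M) a σ := mul_apply_le_mul_apply ih (fun _ _ => le_rfl) a σ
      _ = (M' ^ k * (A * M)) a σ := by rw [Matrix.mul_assoc]
      _ ≤ (M' ^ k * (M' * A)) a σ := mul_apply_le_mul_apply (fun _ _ => le_rfl) h a σ
      _ = (M' ^ (k + 1) * A) a σ := by rw [pow_succ, Matrix.mul_assoc]

theorem pow_apply_le_pow_apply_of_linearLift_mul_le [Fintype m] [DecidableEq m] [Fintype n]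
    [DecidableEq n] {α : m → n} {M : Matrix m m R} {M' : Matrix n n R}
    (h : ∀ a σ, (linearLift R α * M) a σ ≤ (M' * linearLift R α) a σ) (k : ℕ) (i f : m) :
    (M ^ k) i f ≤ (M' ^ k) (α i) (α f) :=
  calc (M ^ k) i f ≤ (linearLift R α * M ^ k) (α i) f := apply_le_linearLift_mul_apply α _ i f
    _ ≤ (M' ^ k * linearLift R α) (α i) f := mul_pow_apply_le_pow_mul_apply h k _ _
    _ = (M' ^ k) (α i) (α f) := mul_linearLift_apply α _ _ _

end Matrix

theorem stmt_6_general {Q : Type*} [CommSemiring Q] [CompleteLattice Q]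
    (hle : ∀ a b : Q, a ≤ b ↔ a + b = b)
    {S S' : Type*} [Fintype S] [DecidableEq S] [Fintype S'] [DecidableEq S']
    (α : S → S') (M : Matrix S S Q) (I F : Set S)
    (M' : Matrix S' S' Q) (I' F' : Set S')
    (hcorrect : ∀ (a : S') (σ : S),
      ((Matrix.of fun a σ => if α σ = a then (1 : Q) else ⊥) * M) a σ ≤
        (M' * (Matrix.of fun a σ => if α σ = a then (1 : Q) else ⊥)) a σ)
    (hI : α '' I ⊆ I') (hF : α '' F ⊆ F') :
    (⨆ i ∈ I, ⨆ f ∈ F, ⨆ (k : ℕ) (_ : 1 ≤ k), (M ^ k) i f) ≤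
      ⨆ i ∈ I', ⨆ f ∈ F', ⨆ (k : ℕ) (_ : 1 ≤ k), (M' ^ k) i f := by
  let _ := canonicallyOrderedAdd_of_le_iff_add_eq hle
  have hbot : (⊥ : Q) = 0 := (bot_unique zero_le).symm
  simp only [hbot] at hcorrect
  refine iSup₂_le fun i hi => iSup₂_le fun f hf => iSup₂_le fun k hk => ?_
  exact (pow_apply_le_pow_apply_of_linearLift_mul_le hcorrect k i f).trans <|
    le_iSup₂_of_le (α i) (hI ⟨i, hi, rfl⟩) <| le_iSup₂_of_le (α f) (hF ⟨f, hf, rfl⟩) <|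
      le_iSup₂_of_le k hk le_rfl

/-- Let `Q` be a complete idempotent dioid, `α : Σ → Σ#`, and
`P = (Σ, M, I, F)`, `P# = (Σ#, M#, I#, F#)` quantitative programs. If `(P, P#, α)` is a
correct abstraction then `gc(P) ≤ gc(P#)`, where
`gc = ⨆ {(N ^ k) i f : i initial, f final, k ≥ 1}`. -/
theorem stmt_6 {Q : Type*} [CommSemiring Q] [CompleteLattice Q]
    (hidem : ∀ a : Q, a + a = a)
    (hle : ∀ a b : Q, a ≤ b ↔ a + b = b)
    (hsup : ∀ a b : Q, a ⊔ b = a + b)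
    (hbot : (⊥ : Q) = 0)
    (hdistrib : ∀ (a : Q) (X : Set Q), a * sSup X = ⨆ x ∈ X, a * x)
    {S S' : Type*} [Fintype S] [DecidableEq S] [Fintype S'] [DecidableEq S']
    (α : S → S') (M : Matrix S S Q) (I F : Set S)
    (M' : Matrix S' S' Q) (I' F' : Set S')
    (hcorrect : ∀ (a : S') (σ : S),
      ((Matrix.of fun a σ => if α σ = a then (1 : Q) else ⊥) * M) a σ ≤
        (M' * (Matrix.of fun a σ => if α σ = a then (1 : Q) else ⊥)) a σ)
    (hI : α '' I ⊆ I') (hF : α '' F ⊆ F') :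
    (⨆ i ∈ I, ⨆ f ∈ F, ⨆ (k : ℕ) (_ : 1 ≤ k), (M ^ k) i f) ≤
      ⨆ i ∈ I', ⨆ f ∈ F', ⨆ (k : ℕ) (_ : 1 ≤ k), (M' ^ k) i f :=
  stmt_6_general hle α M I F M' I' F' hcorrect hI hF
end

section
/- Let Q be a complete idempotent dioid, Σ and Σ# finite sets, and let A ∈ Q^{Σ#×Σ}, M ∈ Q^{Σ×Σ}, M# ∈ Q^{Σ#×Σ#} with all entries of A equal to ⊥ or e, such that (M, M#, A) is a correct linear abstraction (A M ≤ M# A entrywise). Let I, F ⊆ Σ and I#, F# ⊆ Σ# satisfy: for every i ∈ I there exists s# ∈ I# with A_{s#,i} = e, and for every f ∈ F and every a ∈ Σ# with A_{a,f} = e one has a ∈ F#. Then the global costs satisfy gc(Σ, M, I, F) ≤ gc(Σ#, M#, I#, F#). -/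
/-!
In an idempotent semiring ordered by `a ≤ b ↔ a + b = b`, addition is the binary supremum and
`0 = ⊥`, so a matrix entry `(A * B) i j` is the finite supremum of the `A i k * B k j` and
matrix multiplication is monotone. Correctness `A M ≤ M# A` then propagates to
`A Mᵏ ≤ M#ᵏ A`. For `i ∈ I`, `f ∈ F` pick `a ∈ I#` with `A a i = e`: then
`Mᵏ i f ≤ (A Mᵏ) a f ≤ (M#ᵏ A) a f`, and the last entry is a supremum of terms that are `⊥`
or `M#ᵏ a b` with `A b f = e`, hence `b ∈ F#`.
-/

open Matrix

section CanonicallyOrderedIdempotent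

variable {Q : Type*} [CommSemiring Q] [CompleteLattice Q]

theorem zero_eq_bot_of_le_iff (hle : ∀ a b : Q, a ≤ b ↔ a + b = b) : (0 : Q) = ⊥ :=
  le_antisymm ((hle _ _).2 (zero_add _)) bot_le

theorem add_eq_sup_of_le_iff (hidem : ∀ a : Q, a + a = a)
    (hle : ∀ a b : Q, a ≤ b ↔ a + b = b) (a b : Q) : a + b = a ⊔ b := by
  refine le_antisymm ((hle _ _).2 ?_) (sup_le ((hle _ _).2 ?_) ((hle _ _).2 ?_))
  · rw [add_assoc, (hle b _).1 le_sup_right, (hle a _).1 le_sup_left]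
  · rw [← add_assoc, hidem]
  · rw [add_left_comm, hidem]

theorem sum_eq_sup_of_le_iff (hidem : ∀ a : Q, a + a = a)
    (hle : ∀ a b : Q, a ≤ b ↔ a + b = b) {ι : Type*} (s : Finset ι) (f : ι → Q) :
    ∑ x ∈ s, f x = s.sup f := by
  induction s using Finset.cons_induction with
  | empty => exact zero_eq_bot_of_le_iff hle
  | cons y s hy ih =>
    rw [Finset.sum_cons, Finset.sup_cons, ih, add_eq_sup_of_le_iff hidem hle]

theorem mul_le_mul_of_le_iff (hle : ∀ a b : Q, a ≤ b ↔ a + b = b) {a b c d : Q}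
    (hac : a ≤ c) (hbd : b ≤ d) : a * b ≤ c * d :=
  calc a * b ≤ c * b := (hle _ _).2 (by rw [← add_mul, (hle a c).1 hac])
    _ ≤ c * d := (hle _ _).2 (by rw [← mul_add, (hle b d).1 hbd])

variable {l m n : Type*} [Fintype m]

theorem Matrix.mul_apply_eq_sup (hidem : ∀ a : Q, a + a = a)
    (hle : ∀ a b : Q, a ≤ b ↔ a + b = b) (A : Matrix l m Q) (B : Matrix m n Q) (i : l) (j : n) :
    (A * B) i j = Finset.univ.sup fun k => A i k * B k j := by
  rw [mul_apply, sum_eq_sup_of_le_iff hidem hle]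

theorem Matrix.mul_apply_mono (hidem : ∀ a : Q, a + a = a)
    (hle : ∀ a b : Q, a ≤ b ↔ a + b = b) {A A' : Matrix l m Q} {B B' : Matrix m n Q}
    (hA : ∀ i k, A i k ≤ A' i k) (hB : ∀ k j, B k j ≤ B' k j) (i : l) (j : n) :
    (A * B) i j ≤ (A' * B') i j := by
  simp only [mul_apply_eq_sup hidem hle]
  exact Finset.sup_mono_fun fun k _ => mul_le_mul_of_le_iff hle (hA i k) (hB k j)

theorem Matrix.mul_pow_apply_le_pow_mul_apply_s9 [DecidableEq m] [Fintype n] [DecidableEq n]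
    (hidem : ∀ a : Q, a + a = a) (hle : ∀ a b : Q, a ≤ b ↔ a + b = b)
    {A : Matrix n m Q} {M : Matrix m m Q} {M' : Matrix n n Q}
    (hcorrect : ∀ a σ, (A * M) a σ ≤ (M' * A) a σ) (k : ℕ) (a : n) (σ : m) :
    (A * M ^ k) a σ ≤ (M' ^ k * A) a σ := by
  induction k generalizing a σ with
  | zero => simp
  | succ k ih =>
    calc (A * M ^ (k + 1)) a σ = (A * M ^ k * M) a σ := by rw [pow_succ, Matrix.mul_assoc]
      _ ≤ (M' ^ k * A * M) a σ := mul_apply_mono hidem hle ih (fun _ _ => le_rfl) a σ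
      _ = (M' ^ k * (A * M)) a σ := by rw [Matrix.mul_assoc]
      _ ≤ (M' ^ k * (M' * A)) a σ := mul_apply_mono hidem hle (fun _ _ => le_rfl) hcorrect a σ
      _ = (M' ^ (k + 1) * A) a σ := by rw [pow_succ, Matrix.mul_assoc]

end CanonicallyOrderedIdempotent

theorem stmt_9_general {Q : Type*} [CommSemiring Q] [CompleteLattice Q]
    (hidem : ∀ a : Q, a + a = a)
    (hle : ∀ a b : Q, a ≤ b ↔ a + b = b)
    {S S' : Type*} [Fintype S] [DecidableEq S] [Fintype S'] [DecidableEq S']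
    (A : Matrix S' S Q) (M : Matrix S S Q) (M' : Matrix S' S' Q)
    (hA : ∀ (a : S') (σ : S), A a σ = ⊥ ∨ A a σ = 1)
    (hcorrect : ∀ (a : S') (σ : S), (A * M) a σ ≤ (M' * A) a σ)
    (I F : Set S) (I' F' : Set S')
    (hI : ∀ i ∈ I, ∃ a ∈ I', A a i = 1)
    (hF : ∀ f ∈ F, ∀ a : S', A a f = 1 → a ∈ F') :
    (⨆ i ∈ I, ⨆ f ∈ F, ⨆ (k : ℕ) (_ : 1 ≤ k), (M ^ k) i f) ≤
      ⨆ i ∈ I', ⨆ f ∈ F', ⨆ (k : ℕ) (_ : 1 ≤ k), (M' ^ k) i f := by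
  refine iSup₂_le fun i hi => iSup₂_le fun f hf => iSup₂_le fun k hk => ?_
  obtain ⟨a, haI', hai⟩ := hI i hi
  calc (M ^ k) i f = A a i * (M ^ k) i f := by rw [hai, one_mul]
    _ ≤ (A * M ^ k) a f := by
      rw [mul_apply_eq_sup hidem hle]
      exact Finset.le_sup (f := fun x => A a x * (M ^ k) x f) (Finset.mem_univ i)
    _ ≤ (M' ^ k * A) a f := mul_pow_apply_le_pow_mul_apply_s9 hidem hle hcorrect k a f
    _ ≤ _ := by
      rw [mul_apply_eq_sup hidem hle]
      refine Finset.sup_le fun b _ => ?_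
      rcases hA b f with hbot | hone
      · rw [hbot, ← zero_eq_bot_of_le_iff hle, mul_zero, zero_eq_bot_of_le_iff hle]
        exact bot_le
      · rw [hone, mul_one]
        exact le_iSup₂_of_le a haI' <|
          le_iSup₂_of_le b (hF f hf b hone) <| le_iSup₂_of_le k hk le_rfl

/-- Let `Q` be a complete idempotent dioid, `(M, M#, A)` a correct linear
abstraction with `A` a `⊥`/`e` matrix. If every initial state `i ∈ I` has an abstract state
`s# ∈ I#` with `A s# i = e`, and every abstract state related to a final state of `F` lies
in `F#`, then `gc(Σ, M, I, F) ≤ gc(Σ#, M#, I#, F#)`. -/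
theorem stmt_9 {Q : Type*} [CommSemiring Q] [CompleteLattice Q]
    (hidem : ∀ a : Q, a + a = a)
    (hle : ∀ a b : Q, a ≤ b ↔ a + b = b)
    (hsup : ∀ a b : Q, a ⊔ b = a + b)
    (hbot : (⊥ : Q) = 0)
    (hdistrib : ∀ (a : Q) (X : Set Q), a * sSup X = ⨆ x ∈ X, a * x)
    {S S' : Type*} [Fintype S] [DecidableEq S] [Fintype S'] [DecidableEq S']
    (A : Matrix S' S Q) (M : Matrix S S Q) (M' : Matrix S' S' Q)
    (hA : ∀ (a : S') (σ : S), A a σ = ⊥ ∨ A a σ = 1)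
    (hcorrect : ∀ (a : S') (σ : S), (A * M) a σ ≤ (M' * A) a σ)
    (I F : Set S) (I' F' : Set S')
    (hI : ∀ i ∈ I, ∃ a ∈ I', A a i = 1)
    (hF : ∀ f ∈ F, ∀ a : S', A a f = 1 → a ∈ F') :
    (⨆ i ∈ I, ⨆ f ∈ F, ⨆ (k : ℕ) (_ : 1 ≤ k), (M ^ k) i f) ≤
      ⨆ i ∈ I', ⨆ f ∈ F', ⨆ (k : ℕ) (_ : 1 ≤ k), (M' ^ k) i f :=
  stmt_9_general hidem hle A M M' hA hcorrect I F I' F' hI hF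
end

section
/- Let Q be a selective cost dioid, Σ and Σ# finite sets, and let A ∈ Q^{Σ#×Σ}, M ∈ Q^{Σ×Σ}, M# ∈ Q^{Σ#×Σ#} with all entries of A equal to ⊥ or e, such that (M, M#, A) is a correct linear abstraction (A M ≤ M# A entrywise). Let σ ∈ Σ and k ≥ 1 be such that (M^k)_{σ,σ} ≠ ⊥, and let s ≥ 1 be the number of abstract states a ∈ Σ# with A_{a,σ} = e. Then there exist σ#_j ∈ Σ# with A_{σ#_j,σ} = e and an integer r with 1 ≤ r ≤ s such that √[k]{ (M^k)_{σ,σ} } ≤ √[kr]{ ((M#)^{kr})_{σ#_j,σ#_j} }. -/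
/-!
Iterating correctness gives `A M^k ≤ M#^k A`. For an abstract state `a` of `σ` (`A a σ = e`) this
yields `q := (M^k) σ σ ≤ (M#^k A) a σ = ⨁_b (M#^k) a b ⊗ A b σ`, and selectivity picks a single
summand, i.e. an abstract state `b` of `σ` with `q ≤ (M#^k) a b`. This successor relation on the `s`
abstract states of `σ` has a cycle of some length `r ≤ s`, along which `q^r ≤ (M#^{kr}) a a`.
Taking `kr`-th roots concludes, since in a selective dioid the injective, monotone power maps
reflect the (total) order.
-/

open Matrix Function

theorem Function.exists_isPeriodicPt_le_card {α : Type*} [Finite α] [Nonempty α] (f : α → α) :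
    ∃ x r, 0 < r ∧ r ≤ Nat.card α ∧ IsPeriodicPt f r x := by
  obtain ⟨x₀⟩ := ‹Nonempty α›
  obtain ⟨m, n, heq, hne⟩ : ∃ m n, f^[m] x₀ = f^[n] x₀ ∧ m ≠ n := by
    simpa [Injective] using not_injective_infinite_finite (f^[·] x₀)
  wlog hmn : m < n generalizing m n
  · exact this n m heq.symm hne.symm (by omega)
  have hx : f^[m] x₀ ∈ periodicPts f := by
    refine mk_mem_periodicPts (n := n - m) (by omega) ?_
    rw [IsPeriodicPt, IsFixedPt, ← iterate_add_apply, Nat.sub_add_cancel hmn.le, heq]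
  have := Fintype.ofFinite α
  exact ⟨_, _, minimalPeriod_pos_of_mem_periodicPts hx,
    Nat.card_eq_fintype_card (α := α) ▸ minimalPeriod_le_card, isPeriodicPt_minimalPeriod _ _⟩

namespace Dioid

variable {Q : Type*} [CommSemiring Q] [PartialOrder Q]

theorem bot_eq_zero [OrderBot Q] (hle : ∀ a b : Q, a ≤ b ↔ a + b = b) : (⊥ : Q) = 0 :=
  le_antisymm bot_le ((hle _ _).2 (zero_add _))

theorem le_add_right (hle : ∀ a b : Q, a ≤ b ↔ a + b = b) (a b : Q) : a ≤ a + b := by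
  rw [hle, ← add_assoc, (hle a a).1 le_rfl]

theorem add_le_add (hle : ∀ a b : Q, a ≤ b ↔ a + b = b) {a b c d : Q} (hab : a ≤ b)
    (hcd : c ≤ d) : a + c ≤ b + d := by
  rw [hle] at hab hcd ⊢
  rw [add_add_add_comm, hab, hcd]

theorem mul_le_mul (hle : ∀ a b : Q, a ≤ b ↔ a + b = b) {a b c d : Q} (hab : a ≤ b)
    (hcd : c ≤ d) : a * c ≤ b * d := by
  have mul_left_mono : ∀ {x y : Q} (z : Q), x ≤ y → z * x ≤ z * y := by
    intro x y z h
    rw [hle] at h ⊢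
    rw [← mul_add, h]
  calc a * c ≤ a * d := mul_left_mono a hcd
    _ = d * a := mul_comm a d
    _ ≤ d * b := mul_left_mono d hab
    _ = b * d := mul_comm d b

theorem pow_le_pow (hle : ∀ a b : Q, a ≤ b ↔ a + b = b) {a b : Q} (hab : a ≤ b) (n : ℕ) :
    a ^ n ≤ b ^ n := by
  induction n with
  | zero => simp only [pow_zero, le_rfl]
  | succ n ih => simpa only [pow_succ] using mul_le_mul hle ih hab

theorem sum_le_sum (hle : ∀ a b : Q, a ≤ b ↔ a + b = b) {ι : Type*} (t : Finset ι)
    {f g : ι → Q} (h : ∀ i ∈ t, f i ≤ g i) : ∑ i ∈ t, f i ≤ ∑ i ∈ t, g i := by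
  classical
  induction t using Finset.induction with
  | empty => rfl
  | insert i t hi ih =>
    rw [Finset.sum_insert hi, Finset.sum_insert hi]
    exact add_le_add hle (h i (t.mem_insert_self i))
      (ih fun j hj => h j (Finset.mem_insert_of_mem hj))

theorem single_le_sum (hle : ∀ a b : Q, a ≤ b ↔ a + b = b) {ι : Type*} {t : Finset ι}
    (f : ι → Q) {i : ι} (hi : i ∈ t) : f i ≤ ∑ j ∈ t, f j := by
  classical
  rw [← Finset.add_sum_erase t f hi]
  exact le_add_right hle _ _

theorem exists_le_of_le_sum (hle : ∀ a b : Q, a ≤ b ↔ a + b = b)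
    (hsel : ∀ a b : Q, a + b = a ∨ a + b = b) {ι : Type*} (t : Finset ι) (f : ι → Q) {q : Q}
    (hq : q ≠ 0) (h : q ≤ ∑ i ∈ t, f i) : ∃ i ∈ t, q ≤ f i := by
  classical
  induction t using Finset.induction with
  | empty => exact absurd (by simpa using (hle _ _).1 h) hq
  | insert i t hi ih =>
    rw [Finset.sum_insert hi] at h
    rcases hsel (f i) (∑ j ∈ t, f j) with hc | hc
    · exact ⟨i, t.mem_insert_self i, hc ▸ h⟩
    · obtain ⟨j, hj, hqj⟩ := ih (hc ▸ h)
      exact ⟨j, Finset.mem_insert_of_mem hj, hqj⟩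

theorem le_of_pow_le_pow (hle : ∀ a b : Q, a ≤ b ↔ a + b = b)
    (hsel : ∀ a b : Q, a + b = a ∨ a + b = b) {n : ℕ}
    (hinj : ∀ x y : Q, x ^ n = y ^ n → x = y) {a b : Q} (h : a ^ n ≤ b ^ n) : a ≤ b := by
  rcases hsel a b with hba | hab
  · have hba : b ≤ a := (hle b a).2 (by rw [add_comm, hba])
    exact (hinj a b (le_antisymm h (pow_le_pow hle hba n))).le
  · exact (hle a b).2 hab

variable {l m n : Type*} [Fintype m]

theorem mul_apply_le_mul_apply (hle : ∀ a b : Q, a ≤ b ↔ a + b = b) {A A' : Matrix l m Q}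
    {B B' : Matrix m n Q} (hA : ∀ i j, A i j ≤ A' i j) (hB : ∀ i j, B i j ≤ B' i j)
    (i : l) (k : n) : (A * B) i k ≤ (A' * B') i k :=
  sum_le_sum hle _ fun j _ => mul_le_mul hle (hA i j) (hB j k)

theorem le_mul_apply (hle : ∀ a b : Q, a ≤ b ↔ a + b = b) (A : Matrix l m Q) (B : Matrix m n Q)
    (i : l) (j : m) (k : n) : A i j * B j k ≤ (A * B) i k :=
  single_le_sum hle (fun j => A i j * B j k) (Finset.mem_univ j)

variable [DecidableEq m]

theorem mul_pow_apply_le_pow_mul_apply [Fintype l] [DecidableEq l]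
    (hle : ∀ a b : Q, a ≤ b ↔ a + b = b) {A : Matrix l m Q} {M : Matrix m m Q}
    {M' : Matrix l l Q} (hcorrect : ∀ a σ, (A * M) a σ ≤ (M' * A) a σ) (n : ℕ) (a : l) (σ : m) :
    (A * M ^ n) a σ ≤ (M' ^ n * A) a σ := by
  induction n generalizing a σ with
  | zero => simp
  | succ n ih =>
    calc (A * M ^ (n + 1)) a σ = (A * M ^ n * M) a σ := by rw [pow_succ, Matrix.mul_assoc]
      _ ≤ (M' ^ n * A * M) a σ := mul_apply_le_mul_apply hle ih (fun _ _ => le_rfl) a σ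
      _ = (M' ^ n * (A * M)) a σ := by rw [Matrix.mul_assoc]
      _ ≤ (M' ^ n * (M' * A)) a σ := mul_apply_le_mul_apply hle (fun _ _ => le_rfl) hcorrect a σ
      _ = (M' ^ (n + 1) * A) a σ := by rw [pow_succ, Matrix.mul_assoc]

theorem exists_le_pow_apply_of_mul_pow_apply_le [Fintype l] [DecidableEq l]
    (hle : ∀ a b : Q, a ≤ b ↔ a + b = b) (hsel : ∀ a b : Q, a + b = a ∨ a + b = b)
    {A : Matrix l m Q} {M : Matrix m m Q} {M' : Matrix l l Q} {σ : m}
    (hA : ∀ b, A b σ = 0 ∨ A b σ = 1) (hcorrect : ∀ a σ, (A * M) a σ ≤ (M' * A) a σ) {n : ℕ}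
    (hM : (M ^ n) σ σ ≠ 0) {a : l} (ha : A a σ = 1) :
    ∃ b, A b σ = 1 ∧ (M ^ n) σ σ ≤ (M' ^ n) a b := by
  have h : (M ^ n) σ σ ≤ ∑ b, (M' ^ n) a b * A b σ :=
    calc (M ^ n) σ σ = A a σ * (M ^ n) σ σ := by rw [ha, one_mul]
      _ ≤ (A * M ^ n) a σ := le_mul_apply hle _ _ _ _ _
      _ ≤ (M' ^ n * A) a σ := mul_pow_apply_le_pow_mul_apply hle hcorrect n a σ
  obtain ⟨b, -, hb⟩ := exists_le_of_le_sum hle hsel _ _ hM h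
  rcases hA b with hb0 | hb1
  · rw [hb0, mul_zero, hle, add_zero] at hb
    exact absurd hb hM
  · exact ⟨b, hb1, by rwa [hb1, mul_one] at hb⟩

theorem pow_le_pow_apply_of_chain (hle : ∀ a b : Q, a ≤ b ↔ a + b = b) {N : Matrix m m Q}
    {x : ℕ → m} {q : Q} (hx : ∀ i, q ≤ N (x i) (x (i + 1))) (r : ℕ) :
    q ^ r ≤ (N ^ r) (x 0) (x r) := by
  induction r with
  | zero => simp
  | succ r ih =>
    calc q ^ (r + 1) ≤ (N ^ r) (x 0) (x r) * N (x r) (x (r + 1)) :=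
          (pow_succ q r).trans_le (mul_le_mul hle ih (hx r))
      _ ≤ (N ^ (r + 1)) (x 0) (x (r + 1)) := by
          rw [pow_succ]; exact le_mul_apply hle _ _ _ _ _

theorem exists_pow_le_pow_apply_self (hle : ∀ a b : Q, a ≤ b ↔ a + b = b) {N : Matrix m m Q}
    {P : m → Prop} {q : Q} (hP : ∃ a, P a) (hstep : ∀ a, P a → ∃ b, P b ∧ q ≤ N a b) :
    ∃ a, P a ∧ ∃ r, 1 ≤ r ∧ r ≤ Nat.card {a // P a} ∧ q ^ r ≤ (N ^ r) a a := by
  choose! f hfP hf using hstep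
  let g : {a // P a} → {a // P a} := fun a => ⟨f a, hfP a a.2⟩
  have : Nonempty {a // P a} := nonempty_subtype.2 hP
  obtain ⟨a, r, hr, hrcard, hper⟩ := exists_isPeriodicPt_le_card g
  have hchain : ∀ i, q ≤ N (g^[i] a) (g^[i + 1] a) := fun i => by
    rw [iterate_succ_apply']; exact hf _ (g^[i] a).2
  refine ⟨a, a.2, r, hr, hrcard, ?_⟩
  simpa only [iterate_zero_apply, hper.eq] using
    pow_le_pow_apply_of_chain hle (x := fun i => (g^[i] a).1) hchain r

theorem root_le_root (hle : ∀ a b : Q, a ≤ b ↔ a + b = b)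
    (hsel : ∀ a b : Q, a + b = a ∨ a + b = b) (root : Q → ℕ → Q)
    (hroot : ∀ (q : Q) (n : ℕ), 1 ≤ n → root q n ^ n = q)
    (hroot_unique : ∀ (q x : Q) (n : ℕ), 1 ≤ n → x ^ n = q → x = root q n) {p q : Q} {k r : ℕ}
    (hk : 1 ≤ k) (hr : 1 ≤ r) (h : q ^ r ≤ p) : root q k ≤ root p (k * r) := by
  have hkr : 1 ≤ k * r := Nat.mul_pos hk hr
  refine le_of_pow_le_pow hle hsel (n := k * r)
    (fun x y hxy => (hroot_unique _ x _ hkr hxy).trans (hroot_unique _ y _ hkr rfl).symm) ?_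
  rwa [pow_mul, hroot q k hk, hroot p _ hkr]

end Dioid

theorem stmt_14_general {Q : Type*} [CommSemiring Q] [CompleteLattice Q]
    (hle : ∀ a b : Q, a ≤ b ↔ a + b = b)
    (root : Q → ℕ → Q)
    (hroot : ∀ (q : Q) (n : ℕ), 1 ≤ n → root q n ^ n = q)
    (hroot_unique : ∀ (q x : Q) (n : ℕ), 1 ≤ n → x ^ n = q → x = root q n)
    (hsel : ∀ a b : Q, a + b = a ∨ a + b = b)
    {S S' : Type*} [Fintype S] [DecidableEq S] [Fintype S'] [DecidableEq S']
    (A : Matrix S' S Q) (M : Matrix S S Q) (M' : Matrix S' S' Q)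
    (hA : ∀ (a : S') (σ : S), A a σ = ⊥ ∨ A a σ = 1)
    (hcorrect : ∀ (a : S') (σ : S), (A * M) a σ ≤ (M' * A) a σ)
    (σ : S) (k : ℕ) (hk : 1 ≤ k) (hM : (M ^ k) σ σ ≠ ⊥)
    (s : ℕ) (hs : s = Nat.card { a : S' // A a σ = 1 }) (hs1 : 1 ≤ s) :
    ∃ j : S', A j σ = 1 ∧ ∃ r : ℕ, 1 ≤ r ∧ r ≤ s ∧
      root ((M ^ k) σ σ) k ≤ root ((M' ^ (k * r)) j j) (k * r) := by
  have hq : (M ^ k) σ σ ≠ 0 := Dioid.bot_eq_zero hle ▸ hM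
  have hA₀ : ∀ b, A b σ = 0 ∨ A b σ = 1 := fun b => Dioid.bot_eq_zero hle ▸ hA b σ
  obtain ⟨⟨a, ha⟩⟩ := (Nat.card_pos_iff.1 (hs ▸ hs1)).1
  obtain ⟨j, hj, r, hr, hrs, hqr⟩ :=
    Dioid.exists_pow_le_pow_apply_self hle (N := M' ^ k) ⟨a, ha⟩ fun b hb =>
      Dioid.exists_le_pow_apply_of_mul_pow_apply_le hle hsel hA₀ hcorrect hq hb
  refine ⟨j, hj, r, hr, hs ▸ hrs, Dioid.root_le_root hle hsel root hroot hroot_unique hk hr ?_⟩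
  rwa [pow_mul]

/-- Let `Q` be a selective cost dioid and `(M, M#, A)` a correct linear
abstraction with `A` a `⊥`/`e` matrix. Let `σ` and `k ≥ 1` be such that `(M^k) σ σ ≠ ⊥`,
and let `s ≥ 1` be the number of abstract states `a` with `A a σ = e`. Then there exist
`σ#ⱼ` with `A σ#ⱼ σ = e` and `1 ≤ r ≤ s` with
`√[k]{(M^k) σ σ} ≤ √[kr]{((M#)^{kr}) σ#ⱼ σ#ⱼ}`. -/
theorem stmt_14 {Q : Type*} [CommSemiring Q] [CompleteLattice Q]
    (hidem : ∀ a : Q, a + a = a)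
    (hle : ∀ a b : Q, a ≤ b ↔ a + b = b)
    (hsup : ∀ a b : Q, a ⊔ b = a + b)
    (hbot : (⊥ : Q) = 0)
    (hdistrib : ∀ (a : Q) (X : Set Q), a * sSup X = ⨆ x ∈ X, a * x)
    (root : Q → ℕ → Q)
    (hroot : ∀ (q : Q) (n : ℕ), 1 ≤ n → root q n ^ n = q)
    (hroot_unique : ∀ (q x : Q) (n : ℕ), 1 ≤ n → x ^ n = q → x = root q n)
    (hlsc : ∀ (n : ℕ), 1 ≤ n → ∀ X : Set Q, sSup X ^ n = ⨆ x ∈ X, x ^ n)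
    (hsel : ∀ a b : Q, a + b = a ∨ a + b = b)
    {S S' : Type*} [Fintype S] [DecidableEq S] [Fintype S'] [DecidableEq S']
    (A : Matrix S' S Q) (M : Matrix S S Q) (M' : Matrix S' S' Q)
    (hA : ∀ (a : S') (σ : S), A a σ = ⊥ ∨ A a σ = 1)
    (hcorrect : ∀ (a : S') (σ : S), (A * M) a σ ≤ (M' * A) a σ)
    (σ : S) (k : ℕ) (hk : 1 ≤ k) (hM : (M ^ k) σ σ ≠ ⊥)
    (s : ℕ) (hs : s = Nat.card { a : S' // A a σ = 1 }) (hs1 : 1 ≤ s) :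
    ∃ j : S', A j σ = 1 ∧ ∃ r : ℕ, 1 ≤ r ∧ r ≤ s ∧
      root ((M ^ k) σ σ) k ≤ root ((M' ^ (k * r)) j j) (k * r) :=
  stmt_14_general hle root hroot hroot_unique hsel A M M' hA hcorrect σ k hk hM s hs hs1
end
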